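/- Let p be an odd prime. Then $\sum_{k=1}^{p-1} \frac{D_k(-2)}{k} \equiv -\frac{4}{p} P_{p-(\frac{2}{p})} \pmod{p}$, where $1/k$ denotes the inverse of k mod p and $P_{p-(\frac{2}{p})}$ is divisible by p. -/

import Mathlib

/-- The Delannoy polynomial `D_n(x)` at an integer `x`. -/
def delannoyPoly (n : ℕ) (x : ℤ) : ℤ :=
  ∑ k ∈ Finset.range (n + 1), (n.choose k * (n + k).choose k : ℤ) * x ^ k

/-- The Pell numbers: `P 0 = 0`, `P 1 = 1`, `P (n+2) = 2 * P (n+1) + P n`. -/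
def pellNum : ℕ → ℤ
  | 0 => 0
  | 1 => 1
  | (n + 2) => 2 * pellNum (n + 1) + pellNum n

/-!
Write `p = 2M + 1`. Since `C(k, j) C(k + j, j) = C(k + j, 2j) C(2j, j)`, the sum
`∑_{k=1}^{p-1} D_k(x) / k` equals `∑_j C(2j, j) x^j ∑_k C(k + j, 2j) / k`. For `1 ≤ j ≤ M` the inner summand is a
polynomial in `k` of degree `2j - 1 < p - 1`, so its sum over `k ∈ 𝔽_p` vanishes and the inner sum
is minus its value at `0`; this gives `C(2j, j) ∑_k C(k + j, 2j) / k ≡ (-1)^j / j`. For `j > M`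
the factor `C(2j, j)` vanishes mod `p`, and the term `j = 0` is the harmonic sum, which is `0`.
Hence `∑_k D_k(x) / k ≡ ∑_{j=1}^{M} (-x)^j / j`, which is `∑_{j=1}^{M} 2^j / j` for `x = -2`.

For the Pell side, write `(1 + √2)^p = Q + P√2`. Expanding binomially and using
`C(p, k) / p ≡ (-1)^(k-1) / k` gives `Q = 1 + pA` with `2A ≡ -∑_{j=1}^{M} 2^j / j` and
`P ≡ 2^M ≡ ε := (2/p)`, so `P_{p-ε} = Q - εP = pt`. The norm equation `Q² - 2P² = -1` gives
`2(Q - εP)(Q + εP) = Q² - 1`, i.e. `2t(2Q - pt) = A(pA + 2)`, so `-4t ≡ -2A ≡ ∑_{j=1}^{M} 2^j / j` mod `p`.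
-/

open Finset Polynomial Nat Zsqrtd

theorem Finset.sum_Icc_one_eq_sum_range {M : Type*} [AddCommMonoid M] (f : ℕ → M) (n : ℕ) :
    ∑ k ∈ Icc 1 n, f k = ∑ i ∈ range n, f (i + 1) := by
  rw [← Ico_add_one_right_eq_Icc, sum_Ico_eq_sum_range, Nat.add_sub_cancel]
  simp only [add_comm]

theorem Finset.sum_range_two_mul {M : Type*} [AddCommMonoid M] (f : ℕ → M) (n : ℕ) :
    ∑ k ∈ range (2 * n), f k = ∑ i ∈ range n, (f (2 * i) + f (2 * i + 1)) := by
  induction n with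
  | zero => simp
  | succ n ih => rw [mul_add_one, sum_range_succ, sum_range_succ, sum_range_succ, ih, add_assoc]

theorem add_pow_prime_eq_sum {R : Type*} [CommRing R] {p : ℕ} (hp : p.Prime) (y : R) :
    (1 + y) ^ p = 1 + y ^ p + p * ∑ k ∈ Icc 1 (p - 1), ((p.choose k / p : ℕ) : R) * y ^ k := by
  have hdvd (k : ℕ) (hk : k ∈ range (p - 1)) :
      ((p.choose (k + 1) : ℕ) : R) = p * (p.choose (k + 1) / p : ℕ) := by
    rw [← Nat.cast_mul, Nat.mul_div_cancel' (hp.dvd_choose_self (by omega) (by simp at hk; omega))]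
  rw [sum_Icc_one_eq_sum_range, mul_sum, sum_congr rfl fun k hk => by rw [← mul_assoc, ← hdvd k hk]]
  obtain ⟨n, rfl⟩ : ∃ n, p = n + 1 := Nat.exists_eq_add_one.mpr hp.pos
  rw [add_comm, add_pow, sum_range_succ, sum_range_succ', Nat.add_sub_cancel]
  simp only [one_pow, mul_one, Nat.sub_self, pow_zero, Nat.choose_self, Nat.cast_one,
    Nat.choose_zero_right]
  rw [sum_congr rfl fun k _ => mul_comm (y ^ (k + 1)) _]
  abel

theorem FiniteField.sum_eval_eq_zero_of_natDegree_lt {K : Type*} [Field K] [Fintype K]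
    {f : K[X]} (hf : f.natDegree < Fintype.card K - 1) : ∑ a, f.eval a = 0 := by
  rw [sum_congr rfl fun a _ => eval_eq_sum_range a, sum_comm]
  refine sum_eq_zero fun i hi => ?_
  rw [← mul_sum, FiniteField.sum_pow_lt_card_sub_one K i (by simp at hi; omega), mul_zero]

section ZMod

variable {p : ℕ} [Fact p.Prime]

theorem ZMod.sum_Icc_natCast_eq_sum_sub {M : Type*} [AddCommGroup M] (n : ℕ) [NeZero n]
    (f : ZMod n → M) : ∑ k ∈ Icc 1 (n - 1), f k = ∑ a, f a - f 0 := by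
  have hrange : ∑ k ∈ range n, f k = ∑ a, f a :=
    sum_nbij' (fun k => (k : ZMod n)) ZMod.val (by simp) (fun a _ => by simpa using a.val_lt)
      (fun k hk => ZMod.val_cast_of_lt (mem_range.mp hk)) (fun a _ => ZMod.natCast_zmod_val a)
      (fun _ _ => rfl)
  obtain ⟨m, rfl⟩ : ∃ m, n = m + 1 := Nat.exists_eq_add_one.mpr (NeZero.pos n)
  rw [← hrange, sum_range_succ', Nat.add_sub_cancel, sum_Icc_one_eq_sum_range]
  simp

theorem ZMod.sum_Icc_natCast_inv_eq_zero (hp : p ≠ 2) :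
    ∑ k ∈ Icc 1 (p - 1), (k : ZMod p)⁻¹ = 0 := by
  have := (Fact.out : p.Prime).two_le
  rw [ZMod.sum_Icc_natCast_eq_sum_sub p (fun a => a⁻¹), inv_zero, sub_zero,
    Fintype.sum_equiv (Equiv.inv (ZMod p)) _ (fun a => a ^ 1) (fun a => by simp),
    FiniteField.sum_pow_lt_card_sub_one _ 1 (by rw [ZMod.card]; omega)]

theorem ZMod.natCast_ne_zero_of_pos_of_lt {k : ℕ} (hk0 : 0 < k) (hkp : k < p) :
    (k : ZMod p) ≠ 0 := by
  rw [Ne, ZMod.natCast_eq_zero_iff]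
  exact fun h => (Nat.le_of_dvd hk0 h).not_gt hkp

theorem ZMod.natCast_factorial_ne_zero {m : ℕ} (h : m < p) : (m ! : ZMod p) ≠ 0 := by
  rw [Ne, ZMod.natCast_eq_zero_iff, (Fact.out : p.Prime).dvd_factorial]
  omega

theorem ZMod.natCast_choose_sub_one {k : ℕ} (hk : k < p) :
    ((p - 1).choose k : ZMod p) = (-1) ^ k := by
  have h := ZMod.cast_descFactorial (p := p) hk.le
  rw [descFactorial_eq_factorial_mul_choose, Nat.cast_mul, mul_comm] at h
  exact mul_right_cancel₀ (ZMod.natCast_factorial_ne_zero hk) h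

theorem ZMod.natCast_choose_div_self {k : ℕ} (hk0 : 0 < k) (hkp : k < p) :
    ((p.choose k / p : ℕ) : ZMod p) = (-1) ^ (k - 1) * (k : ZMod p)⁻¹ := by
  have hp := (Fact.out : p.Prime)
  have hk := ZMod.natCast_ne_zero_of_pos_of_lt hk0 hkp
  have h := add_one_mul_choose_eq (p - 1) (k - 1)
  rw [Nat.sub_add_cancel hp.one_le, Nat.sub_add_cancel hk0,
    ← Nat.mul_div_cancel' (hp.dvd_choose_self hk0.ne' hkp), mul_assoc] at h
  have h' := congrArg (Nat.cast : ℕ → ZMod p) (Nat.eq_of_mul_eq_mul_left hp.pos h)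
  rw [ZMod.natCast_choose_sub_one (by omega), Nat.cast_mul] at h'
  rw [h']
  field_simp

end ZMod

section Delannoy

variable (R : Type*) [CommRing R]

noncomputable def centeredPochhammerDivX (n : ℕ) : R[X] :=
  (∏ i ∈ range (n + 1), (X + C (i + 1 : R))) * ∏ i ∈ range n, (X - C (i + 1 : R))

variable {R}

theorem mul_eval_centeredPochhammerDivX (n : ℕ) (y : R) :
    y * (centeredPochhammerDivX R n).eval y
      = (descPochhammer R (2 * n + 2)).eval (y + (n + 1)) := by
  rw [descPochhammer_eval_eq_prod_range]
  induction n with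
  | zero => simp [centeredPochhammerDivX, prod_range_succ]; ring
  | succ n ih =>
    rw [show 2 * (n + 1) + 2 = 2 * n + 2 + 1 + 1 by ring, prod_range_succ, prod_range_succ']
    have hshift : ∏ k ∈ range (2 * n + 2), (y + ((n + 1 : ℕ) + 1 : R) - ((k + 1 : ℕ) : R))
        = ∏ k ∈ range (2 * n + 2), (y + (n + 1) - k) :=
      prod_congr rfl fun k _ => by push_cast; ring
    rw [hshift, ← ih]
    simp only [centeredPochhammerDivX, eval_mul, eval_prod, eval_add, eval_sub, eval_X, eval_C,
      prod_range_succ _ (n + 1), prod_range_succ _ n]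
    push_cast
    ring

theorem natDegree_centeredPochhammerDivX_le (n : ℕ) :
    (centeredPochhammerDivX R n).natDegree ≤ 2 * n + 1 := by
  refine natDegree_mul_le.trans ?_
  have h1 := (natDegree_prod_le (range (n + 1)) fun i => X + C (i + 1 : R)).trans
    (sum_le_sum fun i _ => (natDegree_add_le _ _).trans
      (max_le natDegree_X_le ((natDegree_C _).trans_le zero_le_one)))
  have h2 := (natDegree_prod_le (range n) fun i => X - C (i + 1 : R)).trans
    (sum_le_sum fun i _ => natDegree_X_sub_C_le (i + 1 : R))
  simp only [sum_const, card_range, smul_eq_mul, mul_one] at h1 h2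
  omega

theorem eval_zero_centeredPochhammerDivX (n : ℕ) :
    (centeredPochhammerDivX R n).eval 0 = (-1) ^ n * (n + 1)! * n ! := by
  simp only [centeredPochhammerDivX, eval_mul, eval_prod, eval_add, eval_sub, eval_X, eval_C,
    zero_add, zero_sub, prod_neg, card_range]
  have hfact (m : ℕ) : ∏ i ∈ range m, ((i : R) + 1) = m ! := by
    rw [← prod_range_add_one_eq_factorial]; push_cast; rfl
  rw [hfact, hfact]
  ring

theorem choose_mul_choose_add_eq (k j : ℕ) :
    (k + j).choose (2 * j) * (2 * j).choose j = k.choose j * (k + j).choose j := by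
  rw [Nat.choose_mul (by omega), show k + j - j = k by omega, show 2 * j - j = j by omega, mul_comm]

theorem delannoyPoly_eq_sum_range (x : ℤ) {k N : ℕ} (hk : k < N) :
    delannoyPoly k x = ∑ j ∈ range N, ((k + j).choose (2 * j) * (2 * j).choose j : ℤ) * x ^ j := by
  rw [delannoyPoly]
  refine sum_subset (range_subset_range.mpr hk) (fun j hj hjk => ?_) |>.trans (sum_congr rfl ?_)
  · simp [Nat.choose_eq_zero_of_lt (show k < j by simp at hj hjk; omega)]
  · intro j _
    exact_mod_cast congrArg (fun m : ℕ => (m : ℤ) * x ^ j) (choose_mul_choose_add_eq k j).symm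

variable {p : ℕ} [Fact p.Prime]

theorem choose_mul_sum_choose_add_mul_inv {j : ℕ} (hj : 0 < j) (hjp : 2 * j < p) :
    ((2 * j).choose j : ZMod p) *
        ∑ k ∈ Icc 1 (p - 1), ((k + j).choose (2 * j) : ZMod p) * (k : ZMod p)⁻¹
      = (-1) ^ j * (j : ZMod p)⁻¹ := by
  obtain ⟨n, hn⟩ : ∃ n, j = n + 1 := Nat.exists_eq_add_one.mpr hj
  have h2j := ZMod.natCast_factorial_ne_zero (p := p) hjp
  have hterm : ∀ k ∈ Icc 1 (p - 1), ((k + j).choose (2 * j) : ZMod p) * (k : ZMod p)⁻¹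
      = ((2 * j) ! : ZMod p)⁻¹ * (centeredPochhammerDivX (ZMod p) n).eval (k : ZMod p) := by
    intro k hk
    have hk0 := ZMod.natCast_ne_zero_of_pos_of_lt (p := p) (k := k) (by simp at hk; omega)
      (by simp at hk; omega)
    have hdesc := mul_eval_centeredPochhammerDivX n (k : ZMod p)
    rw [show (k : ZMod p) + (n + 1) = ((k + j : ℕ) : ZMod p) by push_cast [hn]; ring,
      descPochhammer_eval_eq_descFactorial, Nat.descFactorial_eq_factorial_mul_choose,
      show 2 * n + 2 = 2 * j by omega, Nat.cast_mul] at hdesc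
    rw [eq_inv_mul_iff_mul_eq₀ h2j, ← mul_assoc, ← hdesc]
    field_simp
  have hsum : ∑ k ∈ Icc 1 (p - 1), (centeredPochhammerDivX (ZMod p) n).eval (k : ZMod p)
      = -(centeredPochhammerDivX (ZMod p) n).eval 0 := by
    rw [ZMod.sum_Icc_natCast_eq_sum_sub p fun a => (centeredPochhammerDivX (ZMod p) n).eval a,
      FiniteField.sum_eval_eq_zero_of_natDegree_lt, zero_sub]
    rw [ZMod.card]
    exact (natDegree_centeredPochhammerDivX_le n).trans_lt (by omega)
  have hchoose : ((2 * j).choose j : ZMod p) * j ! * j ! = (2 * j)! := by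
    have := Nat.add_choose_mul_factorial_mul_factorial j j
    rw [← two_mul] at this
    simpa using congrArg (Nat.cast : ℕ → ZMod p) this
  have hjfac : (j ! : ZMod p) = j * n ! := by rw [hn, Nat.factorial_succ]; push_cast; rfl
  have hj0 := ZMod.natCast_ne_zero_of_pos_of_lt (p := p) hj (by omega)
  have hn0 := ZMod.natCast_factorial_ne_zero (p := p) (m := n) (by omega)
  have hC : ((2 * j).choose j : ZMod p) ≠ 0 :=
    left_ne_zero_of_mul (left_ne_zero_of_mul (hchoose ▸ h2j))
  rw [sum_congr rfl hterm, ← mul_sum, hsum, eval_zero_centeredPochhammerDivX, ← hn,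
    show (-1 : ZMod p) ^ j = -(-1) ^ n by rw [hn, pow_succ]; ring, ← hchoose, hjfac]
  field_simp

theorem sum_delannoyPoly_mul_inv (hp : p ≠ 2) (x : ℤ) :
    ∑ k ∈ Icc 1 (p - 1), (delannoyPoly k x : ZMod p) * (k : ZMod p)⁻¹
      = ∑ j ∈ Icc 1 (p / 2), (-x : ZMod p) ^ j * (j : ZMod p)⁻¹ := by
  obtain ⟨M, hM⟩ := (Fact.out : p.Prime).odd_of_ne_two hp
  have hp2 := (Fact.out : p.Prime).two_le
  calc ∑ k ∈ Icc 1 (p - 1), (delannoyPoly k x : ZMod p) * (k : ZMod p)⁻¹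
      = ∑ k ∈ Icc 1 (p - 1), ∑ j ∈ range p,
          ((k + j).choose (2 * j) * (2 * j).choose j : ZMod p) * (x : ZMod p) ^ j *
            (k : ZMod p)⁻¹ := by
        refine sum_congr rfl fun k hk => ?_
        rw [delannoyPoly_eq_sum_range x (N := p) (by simp at hk; omega), Int.cast_sum, sum_mul]
        push_cast
        rfl
    _ = ∑ j ∈ range p, ((2 * j).choose j : ZMod p) * (x : ZMod p) ^ j *
          ∑ k ∈ Icc 1 (p - 1), ((k + j).choose (2 * j) : ZMod p) * (k : ZMod p)⁻¹ := by
        rw [sum_comm]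
        refine sum_congr rfl fun j _ => ?_
        rw [mul_sum]
        exact sum_congr rfl fun k _ => by ring
    _ = ∑ j ∈ Icc 1 (p / 2), (-x : ZMod p) ^ j * (j : ZMod p)⁻¹ := by
        rw [← sum_subset (s₁ := Icc 1 (p / 2)) (fun j hj => by simp at hj ⊢; omega)
          fun j hj hj' => ?_]
        · refine sum_congr rfl fun j hj => ?_
          simp only [mem_Icc] at hj
          rw [mul_comm _ ((x : ZMod p) ^ j), mul_assoc,
            choose_mul_sum_choose_add_mul_inv hj.1 (by omega), neg_pow]
          ring
        · simp only [mem_range, mem_Icc, not_and_or, not_le] at hj hj'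
          rcases hj' with hj0 | hj'
          · simp [show j = 0 by omega, ZMod.sum_Icc_natCast_inv_eq_zero hp]
          · rw [(ZMod.natCast_eq_zero_iff _ _).mpr
              ((Fact.out : p.Prime).dvd_choose hj (by omega) (by omega))]
            simp

end Delannoy

section Pell

theorem Zsqrtd.re_sum {d : ℤ} {ι : Type*} (s : Finset ι) (f : ι → ℤ√d) :
    (∑ i ∈ s, f i).re = ∑ i ∈ s, (f i).re :=
  map_sum (AddMonoidHom.mk' Zsqrtd.re Zsqrtd.re_add) f s

theorem Zsqrtd.sqrtd_pow_two_mul {d : ℤ} (m : ℕ) : (sqrtd : ℤ√d) ^ (2 * m) = ⟨d ^ m, 0⟩ := by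
  rw [pow_mul, sq, dmuld, ← Int.cast_pow]
  ext <;> simp only [re_intCast, im_intCast]

theorem Zsqrtd.sqrtd_pow_two_mul_add_one {d : ℤ} (m : ℕ) :
    (sqrtd : ℤ√d) ^ (2 * m + 1) = ⟨0, d ^ m⟩ := by
  rw [pow_succ, sqrtd_pow_two_mul]
  ext <;> simp

theorem pellNum_eq_im_pow (n : ℕ) : pellNum n = ((1 + sqrtd : ℤ√2) ^ n).im := by
  induction n using Nat.twoStepInduction with
  | zero => rfl
  | one => rfl
  | more n ih1 ih2 =>
    have hsq : (1 + sqrtd : ℤ√2) ^ 2 = 2 * (1 + sqrtd) + 1 := by ext <;> simp [sq]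
    have hrec : (1 + sqrtd : ℤ√2) ^ (n + 2) = 2 * (1 + sqrtd) ^ (n + 1) + (1 + sqrtd) ^ n := by
      linear_combination (1 + sqrtd : ℤ√2) ^ n * hsq
    rw [pellNum, ih1, ih2, hrec]
    simp

theorem pellNum_toNat_sub_eq {n : ℕ} (hn : 0 < n) {ε : ℤ} (hε : ε = 1 ∨ ε = -1) :
    pellNum ((n : ℤ) - ε).toNat = ((1 + sqrtd : ℤ√2) ^ n).re - ε * ((1 + sqrtd : ℤ√2) ^ n).im := by
  obtain ⟨m, rfl⟩ := Nat.exists_eq_add_one.mpr hn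
  rcases hε with rfl | rfl
  · rw [show ((m + 1 : ℕ) - 1 : ℤ).toNat = m by omega, pellNum_eq_im_pow, pow_succ]
    simp only [re_mul, re_add, re_one, re_sqrtd, add_zero, mul_one, im_add, im_one, im_sqrtd,
      zero_add, im_mul, one_mul]
    ring
  · rw [show ((m + 1 : ℕ) - -1 : ℤ).toNat = m + 1 + 1 by omega, pellNum_eq_im_pow, pow_succ]
    simp

theorem norm_one_add_sqrtd_pow {n : ℕ} (hn : Odd n) :
    ((1 + sqrtd : ℤ√2) ^ n).re ^ 2 - 2 * ((1 + sqrtd : ℤ√2) ^ n).im ^ 2 = -1 := by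
  have h := map_pow Zsqrtd.normMonoidHom (1 + sqrtd : ℤ√2) n
  simp only [normMonoidHom, MonoidHom.coe_mk, OneHom.coe_mk, norm_def] at h
  rw [sq, sq, ← mul_assoc, h]
  simp [hn.neg_one_pow]

variable {p M : ℕ} [Fact p.Prime]

theorem re_one_add_sqrtd_pow_prime (hM : p = 2 * M + 1) :
    ∃ A : ℤ, ((1 + sqrtd : ℤ√2) ^ p).re = 1 + p * A ∧
      2 * (A : ZMod p) = -∑ j ∈ Icc 1 M, (2 : ZMod p) ^ j * (j : ZMod p)⁻¹ := by
  have hsq : (sqrtd : ℤ√2) ^ p = ⟨0, 2 ^ M⟩ := hM ▸ sqrtd_pow_two_mul_add_one M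
  refine ⟨∑ k ∈ Icc 1 (p - 1), ((p.choose k / p : ℕ) : ℤ) * ((sqrtd : ℤ√2) ^ k).re, ?_, ?_⟩
  · rw [add_pow_prime_eq_sum Fact.out, hsq]
    simp [Zsqrtd.re_sum]
  · have h2 : (2 : ZMod p) ≠ 0 := Ring.two_ne_zero (by rw [ZMod.ringChar_zmod_n]; omega)
    simp only [Int.cast_sum, Int.cast_mul, Int.cast_natCast]
    rw [show p - 1 = 2 * M by omega, sum_Icc_one_eq_sum_range, sum_range_two_mul, mul_sum,
      sum_Icc_one_eq_sum_range, ← sum_neg_distrib]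
    refine sum_congr rfl fun i hi => ?_
    rw [sqrtd_pow_two_mul_add_one, show 2 * i + 1 + 1 = 2 * (i + 1) by ring, sqrtd_pow_two_mul,
      ZMod.natCast_choose_div_self (k := 2 * (i + 1)) (by omega) (by simp at hi; omega),
      show 2 * (i + 1) - 1 = 2 * i + 1 by omega, pow_succ, pow_mul]
    push_cast
    field_simp
    ring

theorem im_one_add_sqrtd_pow_prime (hM : p = 2 * M + 1) :
    (((1 + sqrtd : ℤ√2) ^ p).im : ZMod p) = 2 ^ M := by
  have hsq : (sqrtd : ℤ√2) ^ p = ⟨0, 2 ^ M⟩ := hM ▸ sqrtd_pow_two_mul_add_one M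
  rw [add_pow_prime_eq_sum Fact.out, hsq]
  simp

theorem pellNum_sub_legendreSym_two (hM : p = 2 * M + 1) :
    ∃ t : ℤ, pellNum ((p : ℤ) - legendreSym p 2).toNat = p * t ∧
      -4 * (t : ZMod p) = ∑ j ∈ Icc 1 M, (2 : ZMod p) ^ j * (j : ZMod p)⁻¹ := by
  have hp0 : (p : ℤ) ≠ 0 := by omega
  have h2 : ((2 : ℤ) : ZMod p) ≠ 0 := by
    exact_mod_cast Ring.two_ne_zero (by rw [ZMod.ringChar_zmod_n]; omega)
  set ε := legendreSym p 2
  have hε : ε = 1 ∨ ε = -1 := legendreSym.eq_one_or_neg_one p h2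
  have hε1 : ε ^ 2 = 1 := by rcases hε with h | h <;> simp [h]
  have hε2 : (ε : ZMod p) = 2 ^ M := by
    rw [legendreSym.eq_pow, show p / 2 = M by omega]; push_cast; rfl
  obtain ⟨A, hQ, hA⟩ := re_one_add_sqrtd_pow_prime hM
  have hP := im_one_add_sqrtd_pow_prime hM
  have hnorm := norm_one_add_sqrtd_pow ⟨M, hM⟩
  set Q := ((1 + sqrtd : ℤ√2) ^ p).re
  set P := ((1 + sqrtd : ℤ√2) ^ p).im
  obtain ⟨t, ht⟩ : (p : ℤ) ∣ Q - ε * P := by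
    rw [← ZMod.intCast_zmod_eq_zero_iff_dvd]
    have := congrArg (Int.cast : ℤ → ZMod p) hε1
    push_cast at this ⊢
    rw [hQ, hP, ← hε2]
    push_cast
    rw [ZMod.natCast_self]
    linear_combination -this
  refine ⟨t, by rw [pellNum_toNat_sub_eq (by omega) hε, ht], ?_⟩
  have key : 2 * t * (2 * Q - p * t) = A * (p * A + 2) := by
    refine mul_left_cancel₀ hp0 ?_
    linear_combination (-2 * (Q - p * t + ε * P)) * ht + (p * A + Q + 1) * hQ + hnorm
      - 2 * P ^ 2 * hε1
  have key' := congrArg (Int.cast : ℤ → ZMod p) key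
  have hQ' := congrArg (Int.cast : ℤ → ZMod p) hQ
  push_cast at key' hQ'
  simp only [ZMod.natCast_self, zero_mul, add_zero, zero_add, sub_zero] at key' hQ'
  rw [hQ'] at key'
  linear_combination -hA - key'

end Pell

theorem sun_1_7 (p : ℕ) [Fact p.Prime] (hp : Odd p) :
    ∑ k ∈ Finset.Icc 1 (p - 1), (delannoyPoly k (-2) : ZMod p) * (k : ZMod p)⁻¹ =
      -4 * ((pellNum ((p : ℤ) - legendreSym p 2).toNat / p : ℤ) : ZMod p) := by
  obtain ⟨M, hM⟩ := hp
  obtain ⟨t, ht, hsum⟩ := pellNum_sub_legendreSym_two hM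
  have hp0 : (p : ℤ) ≠ 0 := by have := (Fact.out : p.Prime).pos; omega
  rw [sum_delannoyPoly_mul_inv (by omega), ht, Int.mul_ediv_cancel_left _ hp0, hsum,
    show p / 2 = M by omega]
  simp
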